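/- arXiv:2605.10072 — 2 statements merged into one kernel-verified Lean document; each statement's English description precedes it below -/
import Mathlib

section
/- (a) For every X ∈ 𝓜, c_F^X = ẽ₁ + ẽ₂ + ẽ₃. (b) For every branch word X ∈ 𝓜, g_F^X = ẽ_{s₀} + ẽ_{t₀} − ẽ_{k₀}. -/
namespace Markov

/-- The ambient space ℝ³. -/
abbrev V3 : Type := Fin 3 → ℝ

/-- Standard basis vectors ẽ₁, ẽ₂, ẽ₃ (indexed by `Fin 3`). -/
noncomputable def e (i : Fin 3) : V3 := Pi.single i 1

/-- The two generating letters of the free monoid 𝓜. -/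
inductive Lt
  | S
  | T
  deriving DecidableEq

/-- Elements of the free monoid 𝓜 on `{S, T}`, as words (lists of letters
read left to right); the monoid operation is `++` and the identity is `[]`. -/
abbrev Word := List Lt

/-- A word is a trunk word iff it consists only of the letter `S`
(otherwise it is a branch word). -/
def IsTrunk (X : Word) : Prop := ∀ l ∈ X, l = Lt.S

/-- Boolean trunk test. -/
def trunkB (X : Word) : Bool := X.all (fun l => decide (l = Lt.S))

/-- One mutation step for the triple `(g_K, g_S, g_T)`; the flag `trunk`
records whether the word being extended (on the right) is a trunk word. -/
noncomputable def gStep (trunk : Bool) (l : Lt) (v : V3 × V3 × V3) :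
    V3 × V3 × V3 :=
  match l with
  | Lt.S => (2 • v.1 - v.2.1, v.1, v.2.2)
  | Lt.T =>
    if trunk then (2 • v.2.1 - v.2.2, v.2.1, v.1)
    else (2 • v.1 - v.2.2, v.1, v.2.1)

/-- Auxiliary recursion computing the g-vectors from the reversed word
(head of the list = last letter of the word). -/
noncomputable def gRev (k s t : Fin 3) : Word → V3 × V3 × V3
  | [] => (2 • e s - e k, e s, e t)
  | l :: X => gStep (trunkB X) l (gRev k s t X)

/-- The triple of modified g-vectors `(g_K^X, g_S^X, g_T^X)` for the
permutation `(k₀, s₀, t₀) = (k, s, t)` of the indices. -/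
noncomputable def g (k s t : Fin 3) (X : Word) : V3 × V3 × V3 :=
  gRev k s t X.reverse

/-- One mutation step for the triple `(c_K, c_S, c_T)`. -/
noncomputable def cStep (trunk : Bool) (l : Lt) (v : V3 × V3 × V3) :
    V3 × V3 × V3 :=
  match l with
  | Lt.S => (-v.2.1, v.1 + 2 • v.2.1, v.2.2)
  | Lt.T =>
    if trunk then (-v.2.2, v.2.1 + 2 • v.2.2, v.1)
    else (-v.2.2, v.1 + 2 • v.2.2, v.2.1)

noncomputable def cRev (k s t : Fin 3) : Word → V3 × V3 × V3
  | [] => (-(e k), e s + 2 • e k, e t)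
  | l :: X => cStep (trunkB X) l (cRev k s t X)

/-- The triple of modified c-vectors `(c_K^X, c_S^X, c_T^X)`. -/
noncomputable def c (k s t : Fin 3) (X : Word) : V3 × V3 × V3 :=
  cRev k s t X.reverse

/-- `g_F^X = g_S^X + g_T^X − g_K^X`. -/
noncomputable def gF (k s t : Fin 3) (X : Word) : V3 :=
  (g k s t X).2.1 + (g k s t X).2.2 - (g k s t X).1

/-- `v_SK^X = g_K^X − g_S^X`. -/
noncomputable def vSK (k s t : Fin 3) (X : Word) : V3 :=
  (g k s t X).1 - (g k s t X).2.1

/-- `v_TK^X = g_K^X − g_T^X`. -/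
noncomputable def vTK (k s t : Fin 3) (X : Word) : V3 :=
  (g k s t X).1 - (g k s t X).2.2

/-- `c_F^X = c_K^X + c_S^X + c_T^X`. -/
noncomputable def cF (k s t : Fin 3) (X : Word) : V3 :=
  (c k s t X).1 + (c k s t X).2.1 + (c k s t X).2.2

/-- `x_SK^X = c_K^X + c_S^X`. -/
noncomputable def xSK (k s t : Fin 3) (X : Word) : V3 :=
  (c k s t X).1 + (c k s t X).2.1

/-- `x_TK^X = −(c_K^X + c_T^X)`. -/
noncomputable def xTK (k s t : Fin 3) (X : Word) : V3 :=
  -((c k s t X).1 + (c k s t X).2.2)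

/-- Closed cone spanned by two vectors. -/
def C2 (v1 v2 : V3) : Set V3 :=
  {x | ∃ la lb : ℝ, 0 ≤ la ∧ 0 ≤ lb ∧ x = la • v1 + lb • v2}

/-- Relatively open cone spanned by two vectors. -/
def C2o (v1 v2 : V3) : Set V3 :=
  {x | ∃ la lb : ℝ, 0 < la ∧ 0 < lb ∧ x = la • v1 + lb • v2}

/-- Closed cone spanned by three vectors. -/
def C3 (v1 v2 v3 : V3) : Set V3 :=
  {x | ∃ la lb lc : ℝ, 0 ≤ la ∧ 0 ≤ lb ∧ 0 ≤ lc ∧ x = la • v1 + lb • v2 + lc • v3}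

/-- Relatively open cone spanned by four vectors. -/
def C4o (v1 v2 v3 v4 : V3) : Set V3 :=
  {x | ∃ la lb lc ld : ℝ, 0 < la ∧ 0 < lb ∧ 0 < lc ∧ 0 < ld ∧
    x = la • v1 + lb • v2 + lc • v3 + ld • v4}

/-- The set `U_∘^X = C°(g_S^X, g_T^X, v_SK^X, v_TK^X)`. -/
noncomputable def Uo (k s t : Fin 3) (X : Word) : Set V3 :=
  C4o (g k s t X).2.1 (g k s t X).2.2 (vSK k s t X) (vTK k s t X)

/-- The set `U^W = U_∘^W ∪ C(g_S^W, g_T^W)`. -/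
noncomputable def Uset (k s t : Fin 3) (W : Word) : Set V3 :=
  Uo k s t W ∪ C2 (g k s t W).2.1 (g k s t W).2.2

/-- Recursion step for the Calkin–Wilf-type coefficients `q`. -/
def qstep (l : Lt) (p : ℤ × ℤ) : ℤ × ℤ :=
  match l with
  | Lt.S => (p.1 + p.2, p.2)
  | Lt.T => (p.2, p.1 + p.2)

/-- `qfun init X` : the pair obtained from `init` by the recursion
`q^{SX} = (a+b, b)`, `q^{TX} = (b, a+b)` (letters prepended). -/
def qfun (init : ℤ × ℤ) : Word → ℤ × ℤ
  | [] => init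
  | l :: X => qstep l (qfun init X)

/-- Recursion step for the coefficients `p`. -/
def pstep (l : Lt) (p : ℤ × ℤ) : ℤ × ℤ :=
  match l with
  | Lt.S => (p.1 + p.2, p.2)
  | Lt.T => (-p.2, -p.1 - p.2)

/-- `pfun init X` : the pair obtained from `init` by the recursion
`p^{SX} = (a+b, b)`, `p^{TX} = (−b, −a−b)` (letters prepended). -/
def pfun (init : ℤ × ℤ) : Word → ℤ × ℤ
  | [] => init
  | l :: X => pstep l (pfun init X)

/-- The three index data `σ₁ = (1,3,2)`, `σ₂ = (2,1,3)`, `σ₃ = (3,2,1)`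
(written with indices `0,1,2` instead of `1,2,3`). -/
def sig : Fin 3 → Fin 3 × Fin 3 × Fin 3 :=
  ![(0, 2, 1), (1, 0, 2), (2, 1, 0)]

/-- Modified g-vectors for the `i`-th subtree of the Markov quiver. -/
noncomputable def gM (i : Fin 3) (X : Word) : V3 × V3 × V3 :=
  g (sig i).1 (sig i).2.1 (sig i).2.2 X

/-- `𝔤ᵢ = ẽ_{s₀(i)} + ẽ_{t₀(i)} − ẽ_{k₀(i)}`. -/
noncomputable def giFrak (i : Fin 3) : V3 :=
  e (sig i).2.1 + e (sig i).2.2 - e (sig i).1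

/-- The set `𝔊ᵢ` of modified g-vectors in the `i`-th subtree. -/
noncomputable def Gset (i : Fin 3) : Set V3 :=
  {v | ∃ a b : ℤ, 1 ≤ a ∧ 1 ≤ b ∧ Int.gcd a b = 1 ∧
      v = giFrak i + (a : ℝ) • (e (sig i).1 - e (sig i).2.2) +
        (b : ℝ) • (e (sig i).2.1 - e (sig i).1)} ∪
    {e (sig i).2.1}

/-- The support `𝒮` of the G-fan of the Markov quiver. -/
noncomputable def Supp : Set V3 :=
  C3 (e 0) (e 1) (e 2) ∪
    ⋃ (i : Fin 3), ⋃ (X : Word), C3 (gM i X).1 (gM i X).2.1 (gM i X).2.2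

/-- The half space `V = {x : x₁+x₂+x₃ > 0} ∪ {0}`. -/
def Vhalf : Set V3 := {x | 0 < x 0 + x 1 + x 2} ∪ {0}

/-!
Every `c`-rule preserves `c_K + c_S + c_T`, whose initial value is `ẽ_k + ẽ_s + ẽ_t`. Along the
trunk the `S`-rule fixes `g_K − g_S = ẽ_s − ẽ_k` and `g_T = ẽ_t`, so at the first letter `T` the
value `g_S + g_T − g_K` becomes `(g_K − g_S) + g_T = ẽ_s + ẽ_t − ẽ_k`; from then on both rules
(in their branch form) preserve `g_S + g_T − g_K`.
-/

def tripleCF (v : V3 × V3 × V3) : V3 := v.1 + v.2.1 + v.2.2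

def tripleGF (v : V3 × V3 × V3) : V3 := v.2.1 + v.2.2 - v.1

theorem tripleCF_cStep (trunk : Bool) (l : Lt) (v : V3 × V3 × V3) :
    tripleCF (cStep trunk l v) = tripleCF v := by
  cases l <;> cases trunk <;>
    simp only [tripleCF, cStep, Bool.false_eq_true, if_true, if_false] <;> abel

theorem tripleGF_gStep_false (l : Lt) (v : V3 × V3 × V3) :
    tripleGF (gStep false l v) = tripleGF v := by
  cases l <;> simp only [tripleGF, gStep, Bool.false_eq_true, if_false] <;> abel

theorem tripleGF_gStep_true_T (v : V3 × V3 × V3) :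
    tripleGF (gStep true Lt.T v) = (v.1 - v.2.1) + v.2.2 := by
  simp only [tripleGF, gStep, if_true]
  abel

theorem gStep_S_fst_sub (trunk : Bool) (v : V3 × V3 × V3) :
    (gStep trunk Lt.S v).1 - (gStep trunk Lt.S v).2.1 = v.1 - v.2.1 := by
  simp only [gStep]
  abel

theorem trunkB_eq_true_iff (X : Word) : trunkB X = true ↔ IsTrunk X := by
  simp [trunkB, IsTrunk]

theorem trunkB_cons_S (X : Word) : trunkB (Lt.S :: X) = trunkB X := by
  simp [trunkB]

theorem isTrunk_reverse_iff (X : Word) : IsTrunk X.reverse ↔ IsTrunk X := by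
  simp [IsTrunk]

theorem e_add_e_add_e_of_pairwise_ne {k s t : Fin 3} (hks : k ≠ s) (hkt : k ≠ t) (hst : s ≠ t) :
    e k + e s + e t = e 0 + e 1 + e 2 := by
  fin_cases k <;> fin_cases s <;> fin_cases t <;> simp_all <;> abel

section Recursions

variable (k s t : Fin 3)

theorem tripleCF_cRev (L : Word) : tripleCF (cRev k s t L) = e k + e s + e t := by
  induction L with
  | nil =>
    simp only [tripleCF, cRev]
    module
  | cons l X ih => rw [cRev, tripleCF_cStep, ih]

theorem gRev_of_trunkB {L : Word} (hL : trunkB L = true) :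
    (gRev k s t L).1 - (gRev k s t L).2.1 = e s - e k ∧ (gRev k s t L).2.2 = e t := by
  induction L with
  | nil =>
    refine ⟨?_, rfl⟩
    simp only [gRev]
    abel
  | cons l X ih =>
    simp only [trunkB, List.all_cons, Bool.and_eq_true, decide_eq_true_eq] at hL
    obtain ⟨rfl, hX⟩ := hL
    obtain ⟨hKS, hT⟩ := ih hX
    rw [gRev, gStep_S_fst_sub, hKS]
    exact ⟨rfl, hT⟩

theorem tripleGF_gRev_of_trunkB_eq_false {L : Word} (hL : trunkB L = false) :
    tripleGF (gRev k s t L) = e s + e t - e k := by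
  induction L with
  | nil => simp [trunkB] at hL
  | cons l X ih =>
    cases hX : trunkB X with
    | false => rw [gRev, hX, tripleGF_gStep_false, ih hX]
    | true =>
      obtain rfl : l = Lt.T := by
        cases l
        · rw [trunkB_cons_S, hX] at hL
          contradiction
        · rfl
      obtain ⟨hKS, hT⟩ := gRev_of_trunkB k s t hX
      rw [gRev, hX, tripleGF_gStep_true_T, hKS, hT]
      abel

end Recursions

/-- independence of `c_F` and of `g_F` on branches. -/
theorem stmt_5 (k s t : Fin 3) (hks : k ≠ s) (hkt : k ≠ t) (hst : s ≠ t) :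
    (∀ X : Word, cF k s t X = e 0 + e 1 + e 2) ∧
    (∀ X : Word, ¬ IsTrunk X → gF k s t X = e s + e t - e k) := by
  refine ⟨fun X => ?_, fun X hX => ?_⟩
  · exact (tripleCF_cRev k s t X.reverse).trans (e_add_e_add_e_of_pairwise_ne hks hkt hst)
  · have hrev : trunkB X.reverse = false := by
      rwa [Bool.eq_false_iff, ne_eq, trunkB_eq_true_iff, isTrunk_reverse_iff]
    exact tripleGF_gRev_of_trunkB_eq_false k s t hrev

end Markov
end

section
/- Fix n ≥ 0. Let Ψ_S be the linear endomorphism of ℝ³ determined by Ψ_S(ẽ_{k₀}) = (−n²−2n+1)ẽ_{k₀} + (n²+3n+2)ẽ_{s₀} − (n+2)ẽ_{t₀}, Ψ_S(ẽ_{s₀}) = (−n²−n)ẽ_{k₀} + (n²+2n+2)ẽ_{s₀} − (n+1)ẽ_{t₀}, Ψ_S(ẽ_{t₀}) = −n·ẽ_{k₀} + (n+1)ẽ_{s₀}; and let Ψ_T be the linear endomorphism determined by Ψ_T(ẽ_{k₀}) = (−n²−3n)ẽ_{k₀} + (n²+4n+3)ẽ_{s₀} − (n+2)ẽ_{t₀},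 Ψ_T(ẽ_{s₀}) = (−n²−2n)ẽ_{k₀} + (n²+3n+2)ẽ_{s₀} − (n+1)ẽ_{t₀}, Ψ_T(ẽ_{t₀}) = −(n+1)ẽ_{k₀} + (n+2)ẽ_{s₀}. Then for every word Y ∈ 𝓜 and every M ∈ {K,S,T}: Ψ_S(g_M^{SⁿTY}) = g_M^{SⁿTSY} and Ψ_T(g_M^{SⁿTY}) = g_M^{SⁿTTY} (concatenations of words). -/
namespace Markov

lemma trunkB_rep (n : ℕ) : trunkB (List.replicate n Lt.S) = true := by
  simp [trunkB]

lemma trunkB_T (Z W : Word) : trunkB (Z ++ Lt.T :: W) = false := by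
  simp [trunkB]

lemma trunkB_ST (Z W : Word) : trunkB (Z ++ Lt.S :: Lt.T :: W) = false := by
  simp [trunkB]

lemma two_nsmul_eq (v : V3) : (2 : ℕ) • v = (2 : ℝ) • v := by
  rw [two_smul, two_smul]

lemma gRev_rep (k s t : Fin 3) (n : ℕ) :
    gRev k s t (List.replicate n Lt.S) =
      (((n : ℝ) + 2) • e s - ((n : ℝ) + 1) • e k,
       ((n : ℝ) + 1) • e s - (n : ℝ) • e k, e t) := by
  induction n with
  | zero =>
      simp only [List.replicate_zero, gRev, Nat.cast_zero]
      refine Prod.ext ?_ (Prod.ext ?_ rfl) <;>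
        simp only [two_nsmul_eq] <;> module
  | succ n ih =>
      simp only [List.replicate_succ, gRev, gStep, ih, Nat.cast_succ]
      refine Prod.ext ?_ (Prod.ext ?_ rfl) <;> simp only [two_nsmul_eq] <;> module

/-- internal isomorphisms of the maximal branch `SⁿT`. -/
theorem stmt_7 (k s t : Fin 3) (hks : k ≠ s) (hkt : k ≠ t) (hst : s ≠ t)
    (n : ℕ) (ΨS ΨT : V3 →ₗ[ℝ] V3)
    (hSk : ΨS (e k) = (-(n : ℝ) ^ 2 - 2 * n + 1) • e k +
      ((n : ℝ) ^ 2 + 3 * n + 2) • e s - ((n : ℝ) + 2) • e t)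
    (hSs : ΨS (e s) = (-(n : ℝ) ^ 2 - n) • e k +
      ((n : ℝ) ^ 2 + 2 * n + 2) • e s - ((n : ℝ) + 1) • e t)
    (hSt : ΨS (e t) = -(n : ℝ) • e k + ((n : ℝ) + 1) • e s)
    (hTk : ΨT (e k) = (-(n : ℝ) ^ 2 - 3 * n) • e k +
      ((n : ℝ) ^ 2 + 4 * n + 3) • e s - ((n : ℝ) + 2) • e t)
    (hTs : ΨT (e s) = (-(n : ℝ) ^ 2 - 2 * n) • e k +
      ((n : ℝ) ^ 2 + 3 * n + 2) • e s - ((n : ℝ) + 1) • e t)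
    (hTt : ΨT (e t) = -((n : ℝ) + 1) • e k + ((n : ℝ) + 2) • e s) :
    ∀ Y : Word,
      ΨS ((g k s t (List.replicate n Lt.S ++ Lt.T :: Y)).1) =
        (g k s t (List.replicate n Lt.S ++ Lt.T :: Lt.S :: Y)).1 ∧
      ΨS ((g k s t (List.replicate n Lt.S ++ Lt.T :: Y)).2.1) =
        (g k s t (List.replicate n Lt.S ++ Lt.T :: Lt.S :: Y)).2.1 ∧
      ΨS ((g k s t (List.replicate n Lt.S ++ Lt.T :: Y)).2.2) =
        (g k s t (List.replicate n Lt.S ++ Lt.T :: Lt.S :: Y)).2.2 ∧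
      ΨT ((g k s t (List.replicate n Lt.S ++ Lt.T :: Y)).1) =
        (g k s t (List.replicate n Lt.S ++ Lt.T :: Lt.T :: Y)).1 ∧
      ΨT ((g k s t (List.replicate n Lt.S ++ Lt.T :: Y)).2.1) =
        (g k s t (List.replicate n Lt.S ++ Lt.T :: Lt.T :: Y)).2.1 ∧
      ΨT ((g k s t (List.replicate n Lt.S ++ Lt.T :: Y)).2.2) =
        (g k s t (List.replicate n Lt.S ++ Lt.T :: Lt.T :: Y)).2.2 := by
  have trunkB_Tcons : ∀ W : Word, trunkB (Lt.T :: W) = false := fun W => by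
    simp [trunkB]
  have aux : ∀ Z : Word,
      ΨS ((gRev k s t (Z ++ Lt.T :: List.replicate n Lt.S)).1) =
        (gRev k s t (Z ++ Lt.S :: Lt.T :: List.replicate n Lt.S)).1 ∧
      ΨS ((gRev k s t (Z ++ Lt.T :: List.replicate n Lt.S)).2.1) =
        (gRev k s t (Z ++ Lt.S :: Lt.T :: List.replicate n Lt.S)).2.1 ∧
      ΨS ((gRev k s t (Z ++ Lt.T :: List.replicate n Lt.S)).2.2) =
        (gRev k s t (Z ++ Lt.S :: Lt.T :: List.replicate n Lt.S)).2.2 ∧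
      ΨT ((gRev k s t (Z ++ Lt.T :: List.replicate n Lt.S)).1) =
        (gRev k s t (Z ++ Lt.T :: Lt.T :: List.replicate n Lt.S)).1 ∧
      ΨT ((gRev k s t (Z ++ Lt.T :: List.replicate n Lt.S)).2.1) =
        (gRev k s t (Z ++ Lt.T :: Lt.T :: List.replicate n Lt.S)).2.1 ∧
      ΨT ((gRev k s t (Z ++ Lt.T :: List.replicate n Lt.S)).2.2) =
        (gRev k s t (Z ++ Lt.T :: Lt.T :: List.replicate n Lt.S)).2.2 := by
    intro Z
    induction Z with
    | nil =>
        simp only [List.nil_append, gRev, gStep, trunkB_rep, trunkB_Tcons,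
          Bool.false_eq_true, if_false, if_true, gRev_rep, two_nsmul_eq]
        refine ⟨?_, ?_, ?_, ?_, ?_, ?_⟩ <;>
          · simp only [map_sub, map_add, map_smul, hSk, hSs, hSt, hTk, hTs, hTt]
            module
    | cons l Z ih =>
        obtain ⟨i1, i2, i3, i4, i5, i6⟩ := ih
        cases l <;>
          · simp only [List.cons_append, gRev, gStep, List.append_eq, trunkB_T,
              trunkB_ST, Bool.false_eq_true, if_false]
            refine ⟨?_, ?_, ?_, ?_, ?_, ?_⟩ <;>
              simp only [map_sub, map_nsmul, i1, i2, i3, i4, i5, i6]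
  intro Y
  have h := aux Y.reverse
  simpa only [g, List.reverse_append, List.reverse_cons, List.reverse_replicate,
    List.append_assoc,
    List.cons_append, List.nil_append, List.singleton_append,
    List.append_nil] using h

end Markov
end
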